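/- Let m ≥ 7 with m ≡ 3 (mod 4), N = 3^m - 1, and v = (3^m - 1)/2 - 3^{(m-1)/2} - 1. Then gcd(v, N) = 1, and for every integer i with 0 ≤ i ≤ (3^{(m-1)/2} + 1)/4 + 1, the base-3 digit sum of (v(1+2i) mod N) is congruent to 1 modulo 4. -/
import Mathlib

lemma sd_eq (n : ℕ) : (Nat.digits 3 n).sum = n % 3 + (Nat.digits 3 (n/3)).sum := by
  rcases eq_or_ne n 0 with rfl | hn
  · simp
  · rw [Nat.digits_def' (by norm_num : 1 < 3) (Nat.pos_of_ne_zero hn)]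
    simp

lemma sd_split (h : ℕ) : ∀ a b : ℕ, a < 3^h →
    (Nat.digits 3 (a + 3^h * b)).sum = (Nat.digits 3 a).sum + (Nat.digits 3 b).sum := by
  induction h with
  | zero => intro a b ha; interval_cases a; simp
  | succ h ih =>
    intro a b ha
    rw [sd_eq (a + 3^(h+1) * b), sd_eq a]
    have e : a + 3^(h+1) * b = a + 3 * (3^h * b) := by ring
    rw [e, Nat.add_mul_mod_self_left, Nat.add_mul_div_left _ _ (by norm_num : 0 < 3)]
    rw [ih (a/3) b (by rw [pow_succ] at ha; omega)]
    omega

lemma sd_rep : ∀ j : ℕ, (Nat.digits 3 (3^j - 1)).sum = 2*j := by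
  intro j
  induction j with
  | zero => simp
  | succ j ih =>
    have hp : 1 ≤ (3:ℕ)^j := Nat.one_le_pow _ _ (by norm_num)
    have e : 3^(j+1) - 1 = 3*(3^j - 1) + 2 := by rw [pow_succ]; omega
    rw [sd_eq, e]
    have e1 : (3*(3^j - 1) + 2) % 3 = 2 := by omega
    have e2 : (3*(3^j - 1) + 2) / 3 = 3^j - 1 := by omega
    rw [e1, e2, ih]; ring

lemma sd_m2 (j : ℕ) : (Nat.digits 3 (3^(j+1) - 2)).sum = 2*j+1 := by
  have hp : 1 ≤ (3:ℕ)^j := Nat.one_le_pow _ _ (by norm_num)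
  have e : 3^(j+1) - 2 = 3*(3^j - 1) + 1 := by rw [pow_succ]; omega
  rw [sd_eq, e]
  have e1 : (3*(3^j - 1) + 1) % 3 = 1 := by omega
  have e2 : (3*(3^j - 1) + 1) / 3 = 3^j - 1 := by omega
  rw [e1, e2, sd_rep]; ring

lemma sd_m3 (j : ℕ) : (Nat.digits 3 (3^(j+1) - 3)).sum = 2*j := by
  have hp : 1 ≤ (3:ℕ)^j := Nat.one_le_pow _ _ (by norm_num)
  have e : 3^(j+1) - 3 = 3*(3^j - 1) := by rw [pow_succ]; omega
  rw [sd_eq, e]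
  have e1 : (3*(3^j - 1)) % 3 = 0 := by omega
  have e2 : (3*(3^j - 1)) / 3 = 3^j - 1 := by omega
  rw [e1, e2, sd_rep]; ring

lemma sd_m4 (j : ℕ) : (Nat.digits 3 (3^(j+2) - 4)).sum = 2*j+3 := by
  have hp : 2 ≤ (3:ℕ)^(j+1) := by nlinarith [Nat.one_le_pow j 3 (by norm_num : 0 < 3), pow_succ 3 j]
  have e : 3^(j+2) - 4 = 3*(3^(j+1) - 2) + 2 := by rw [pow_succ 3 (j+1)]; omega
  rw [sd_eq, e]
  have e1 : (3*(3^(j+1) - 2) + 2) % 3 = 2 := by omega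
  have e2 : (3*(3^(j+1) - 2) + 2) / 3 = 3^(j+1) - 2 := by omega
  rw [e1, e2, sd_m2]; ring

lemma sd_m5 (j : ℕ) : (Nat.digits 3 (3^(j+2) - 5)).sum = 2*j+2 := by
  have hp : 2 ≤ (3:ℕ)^(j+1) := by nlinarith [Nat.one_le_pow j 3 (by norm_num : 0 < 3), pow_succ 3 j]
  have e : 3^(j+2) - 5 = 3*(3^(j+1) - 2) + 1 := by rw [pow_succ 3 (j+1)]; omega
  rw [sd_eq, e]
  have e1 : (3*(3^(j+1) - 2) + 1) % 3 = 1 := by omega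
  have e2 : (3*(3^(j+1) - 2) + 1) / 3 = 3^(j+1) - 2 := by omega
  rw [e1, e2, sd_m2]; ring

lemma sd_par (n : ℕ) : (Nat.digits 3 n).sum % 2 = n % 2 := ((Nat.modEq_digits_sum 2 3 rfl n)).symm

lemma sd_one : (Nat.digits 3 1).sum = 1 := by rw [sd_eq]; norm_num

theorem digit_sum_v_mult_mod_one' (m : ℕ) (hm : 7 ≤ m) (hm4 : m % 4 = 3) :
    Nat.gcd ((3 ^ m - 1) / 2 - 3 ^ ((m - 1) / 2) - 1) (3 ^ m - 1) = 1 ∧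
    ∀ i : ℕ, i ≤ (3 ^ ((m - 1) / 2) + 1) / 4 + 1 →
      (Nat.digits 3 ((((3 ^ m - 1) / 2 - 3 ^ ((m - 1) / 2) - 1) * (1 + 2 * i))
        % (3 ^ m - 1))).sum % 4 = 1 := by
  obtain ⟨w, rfl⟩ : ∃ w, m = 2*(2*w+3)+1 := ⟨(m-7)/4, by omega⟩
  have h27 : (3:ℕ)^(2*w+3) = 27 * 9^w := by
    rw [pow_add, pow_mul]; norm_num; ring
  have h9 : (9:ℕ)^w % 4 = 1 := by rw [Nat.pow_mod]; norm_num
  have hmod4 : 3^(2*w+3) % 4 = 3 := by rw [h27, Nat.mul_mod, h9]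
  have hge : 27 ≤ (3:ℕ)^(2*w+3) := by
    rw [h27]; have := Nat.one_le_pow w 9 (by norm_num); omega
  obtain ⟨u, hu⟩ : ∃ u, (3:ℕ)^(2*w+3) = 4*u+27 := ⟨((3:ℕ)^(2*w+3)-27)/4, by omega⟩
  have hm3 : (3:ℕ)^(2*(2*w+3)+1) = 48*(u*u)+648*u+2187 := by
    rw [show 2*(2*w+3)+1 = (2*w+3)+(2*w+3)+1 from by ring, pow_add, pow_add, pow_one, hu]
    ring
  have hN : (3:ℕ)^(2*(2*w+3)+1) - 1 = 48*(u*u)+648*u+2186 := by omega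
  rw [show (2*(2*w+3)+1-1)/2 = 2*w+3 from by omega]
  have hv : ((3:ℕ)^(2*(2*w+3)+1) - 1)/2 - 3^(2*w+3) - 1 = 24*(u*u)+320*u+1065 := by
    rw [hN, hu]; omega
  rw [hv, hN]
  constructor
  · set d := Nat.gcd (24*(u*u)+320*u+1065) (48*(u*u)+648*u+2186) with hd
    have hd1 : d ∣ 24*(u*u)+320*u+1065 := Nat.gcd_dvd_left _ _
    have hd2 : d ∣ 48*(u*u)+648*u+2186 := Nat.gcd_dvd_right _ _
    have hodd : d % 2 = 1 := by
      by_contra hcon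
      have h2 : 2 ∣ d := by omega
      have := h2.trans hd1
      omega
    have h8 : d ∣ 8*(u+7) := by
      have := Nat.dvd_sub hd2 (hd1.mul_left 2)
      rwa [show 48*(u*u)+648*u+2186 - 2*(24*(u*u)+320*u+1065) = 8*(u+7) from by omega] at this
    have h2nd : ¬ (2 ∣ d) := by omega
    have hc8 : Nat.Coprime d 8 := by
      have := ((Nat.prime_two.coprime_iff_not_dvd).mpr h2nd).pow_left 3
      rw [show (2:ℕ)^3 = 8 from by norm_num] at this
      exact this.symm
    have hu7 : d ∣ u+7 := hc8.dvd_of_dvd_mul_left h8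
    have h2d : d ∣ 2 := by
      have hmul : d ∣ (u+7)*(48*u+312) := hu7.mul_right _
      have := Nat.dvd_sub hd2 hmul
      rwa [show 48*(u*u)+648*u+2186 - (u+7)*(48*u+312) = 2 from by
        rw [show (u+7)*(48*u+312) = 48*(u*u)+648*u+2184 from by ring]; omega] at this
    have := (Nat.dvd_prime Nat.prime_two).mp h2d
    omega
  · intro i hi
    rw [hu] at hi
    have hi' : i ≤ u + 8 := by omega
    rcases show i ≤ u+6 ∨ i = u+7 ∨ i = u+8 from by omega with hA | hB | hC
    · -- case A
      obtain ⟨s, hs⟩ := Nat.le.dest hA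
      have hkey : (24*(u*u)+320*u+1065) * (1+2*i)
          = (2*s + 3^(2*w+3) * (3^(2*w+3) + 2*s)) + i*(48*(u*u)+648*u+2186) := by
        rw [hu]
        have hs' : (i:ℤ) + s = u + 6 := by exact_mod_cast hs
        zify
        linear_combination (-(8*(u:ℤ)+56)) * hs'
      rw [hkey, Nat.add_mul_mod_self_right]
      have hXlt : 2*s + 3^(2*w+3) * (3^(2*w+3) + 2*s) < 48*(u*u)+648*u+2186 := by
        rw [hu]
        have h1 : 4*u+27+2*s ≤ 6*u+39 := by omega
        have h2 : (4*u+27) * (4*u+27+2*s) ≤ (4*u+27) * (6*u+39) := Nat.mul_le_mul_left _ h1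
        have h3 : (4*u+27)*(6*u+39) = 24*(u*u)+318*u+1053 := by ring
        omega
      rw [Nat.mod_eq_of_lt hXlt]
      have hslt : 2*s < 3^(2*w+3) := by rw [hu]; omega
      rw [sd_split _ _ _ hslt,
        show 3^(2*w+3) + 2*s = 2*s + 3^(2*w+3) * 1 from by ring,
        sd_split _ _ _ hslt, sd_one]
      have := sd_par (2*s)
      omega
    · -- case B
      subst hB
      have hkey : (24*(u*u)+320*u+1065) * (1+2*(u+7))
          = ((3^(2*w+3) - 2) + 3^(2*w+3) * (3^(2*w+3) - 3)) + (u+7)*(48*(u*u)+648*u+2186) := by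
        rw [hu, show 4*u+27-2 = 4*u+25 from by omega, show 4*u+27-3 = 4*u+24 from by omega]
        ring
      rw [hkey, Nat.add_mul_mod_self_right]
      have hXlt : (3^(2*w+3) - 2) + 3^(2*w+3) * (3^(2*w+3) - 3) < 48*(u*u)+648*u+2186 := by
        rw [hu, show 4*u+27-3 = 4*u+24 from by omega,
          show (4*u+27)*(4*u+24) = 16*(u*u)+204*u+648 from by ring]
        omega
      rw [Nat.mod_eq_of_lt hXlt]
      rw [sd_split _ _ _ (by omega : 3^(2*w+3) - 2 < 3^(2*w+3))]
      have e2 := sd_m2 (2*w+2)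
      have e3 := sd_m3 (2*w+2)
      rw [show 2*w+2+1 = 2*w+3 from by ring] at e2 e3
      rw [e2, e3]
      omega
    · -- case C
      subst hC
      have hkey : (24*(u*u)+320*u+1065) * (1+2*(u+8))
          = ((3^(2*w+3) - 4) + 3^(2*w+3) * (3^(2*w+3) - 5)) + (u+8)*(48*(u*u)+648*u+2186) := by
        rw [hu, show 4*u+27-4 = 4*u+23 from by omega, show 4*u+27-5 = 4*u+22 from by omega]
        ring
      rw [hkey, Nat.add_mul_mod_self_right]
      have hXlt : (3^(2*w+3) - 4) + 3^(2*w+3) * (3^(2*w+3) - 5) < 48*(u*u)+648*u+2186 := by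
        rw [hu, show 4*u+27-5 = 4*u+22 from by omega,
          show (4*u+27)*(4*u+22) = 16*(u*u)+196*u+594 from by ring]
        omega
      rw [Nat.mod_eq_of_lt hXlt]
      rw [sd_split _ _ _ (by omega : 3^(2*w+3) - 4 < 3^(2*w+3))]
      have e4 := sd_m4 (2*w+1)
      have e5 := sd_m5 (2*w+1)
      rw [show 2*w+1+2 = 2*w+3 from by ring] at e4 e5
      rw [e4, e5]
      omega
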